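/- Let R be a monotone, translative, convex, finite-valued multivariate risk measure with dual representation R(u) = ⋂_{γ ∈ R^J_+\{0}} { z ∈ R^J : γᵀz ≥ sup_{μ∈M_1^J} (γᵀE^μ[u] − β(μ,γ)) }. Then for every u ∈ L^J and every v ∈ R^J: inf{ α ∈ R : v + α𝟙 ∈ R(u) } = sup{ γᵀ(E^μ[u] − v) − β(μ,γ) : μ ∈ M_1^J, γ ∈ R^J_+, γᵀ𝟙 = 1 }. -/

import Mathlib

/-!
By the dual representation, `v + α𝟙 ∈ R(u)` holds iff
`γᵀ(E^μ[u] − v) − β(μ,γ) ≤ α γᵀ𝟙` for every `μ` and every `γ ≥ 0`, `γ ≠ 0`.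
Since `β(μ, ·)` is a supremum of linear functions of `γ`, it is positively homogeneous, so
`γ` may be normalized to `γᵀ𝟙 = 1`; the right-hand side of the theorem is then exactly the
least `α` compatible with all these constraints.
-/

namespace EReal

theorem coe_sub_sub_le_iff {a b c : ℝ} {x : EReal} :
    ((a - b : ℝ) : EReal) - x ≤ c ↔ (a : EReal) - x ≤ (b + c : ℝ) := by
  have hcomm : ((a - b : ℝ) : EReal) - x = (a - x) - b := by
    rw [coe_sub, sub_eq_add_neg, sub_eq_add_neg, sub_eq_add_neg, sub_eq_add_neg, add_right_comm]
  rw [hcomm, sub_le_iff_le_add (.inl (coe_ne_bot b)) (.inl (coe_ne_top b)), add_comm, coe_add]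

theorem coe_le_coe_sub_iSup_coe_iff {ι : Type*} (f : ι → ℝ) (a r : ℝ) :
    (r : EReal) ≤ a - ⨆ i, (f i : EReal) ↔ ∀ i, f i ≤ a - r := by
  rw [le_sub_iff_add_le (.inr (coe_ne_bot a)) (.inr (coe_ne_top a)), add_comm,
    ← le_sub_iff_add_le (.inl (coe_ne_bot r)) (.inl (coe_ne_top r)), ← coe_sub, iSup_le_iff]
  simp only [EReal.coe_le_coe_iff]

theorem iInf_subtype_coe_eq_iSup {P : ℝ → Prop} {ι : Type*} (T : ι → EReal)
    (hle : ∀ i α, P α → T i ≤ α) (hnot : ∀ r, ¬ P r → ∃ i, (r : EReal) ≤ T i) :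
    ⨅ α : {α // P α}, (α : EReal) = ⨆ i, T i := by
  refine le_antisymm (le_of_forall_lt_iff_le.mp fun r hr => ?_)
    (iSup_le fun i => le_iInf fun α => hle i α α.2)
  by_cases hP : P r
  · exact iInf_le_of_le ⟨r, hP⟩ le_rfl
  · obtain ⟨i, hi⟩ := hnot r hP
    exact absurd (hi.trans (le_iSup T i)) (not_le.mpr hr)

end EReal

section DotProduct

variable {κ : Type*} [Fintype κ]

theorem dotProduct_add_const (γ v : κ → ℝ) (α : ℝ) :
    γ ⬝ᵥ (fun j => v j + α) = γ ⬝ᵥ v + (∑ j, γ j) * α := by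
  simp only [dotProduct, mul_add, Finset.sum_add_distrib, Finset.sum_mul]

theorem coe_le_dotProduct_sub_iSup_smul_iff {ι : Type*} (f : ι → κ → ℝ) (x γ : κ → ℝ)
    {c r : ℝ} (hc : 0 < c) :
    ((c * r : ℝ) : EReal) ≤ ((c • γ) ⬝ᵥ x : ℝ) - ⨆ i, (((c • γ) ⬝ᵥ f i : ℝ) : EReal) ↔
      (r : EReal) ≤ (γ ⬝ᵥ x : ℝ) - ⨆ i, ((γ ⬝ᵥ f i : ℝ) : EReal) := by
  simp only [EReal.coe_le_coe_sub_iSup_coe_iff, smul_dotProduct, smul_eq_mul, ← mul_sub,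
    mul_le_mul_iff_right₀ hc]

end DotProduct

theorem stmt11_general {I J : ℕ}
    (R : (Fin I → Fin J → ℝ) → Set (Fin J → ℝ))
    (β : (Fin J → Fin I → ℝ) → (Fin J → ℝ) → EReal)
    (hβ : ∀ μ γ, β μ γ = ⨆ u : {u : Fin I → Fin J → ℝ | (0 : Fin J → ℝ) ∈ R u},
        ((∑ j, γ j * ∑ i, μ j i * (u : Fin I → Fin J → ℝ) i j : ℝ) : EReal))
    (hdual : ∀ u, R u = {z | ∀ γ : Fin J → ℝ, (∀ j, 0 ≤ γ j) → γ ≠ 0 →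
        ∀ μ : Fin J → Fin I → ℝ, (∀ j i, 0 ≤ μ j i) → (∀ j, ∑ i, μ j i = 1) →
        ((∑ j, γ j * ∑ i, μ j i * u i j : ℝ) : EReal) - β μ γ
          ≤ ((∑ j, γ j * z j : ℝ) : EReal)})
    (u : Fin I → Fin J → ℝ) (v : Fin J → ℝ) :
    (⨅ α : {α : ℝ // (fun j => v j + α) ∈ R u}, ((α : ℝ) : EReal)) =
      ⨆ mg : {mg : (Fin J → Fin I → ℝ) × (Fin J → ℝ) //
          (∀ j i, 0 ≤ mg.1 j i) ∧ (∀ j, ∑ i, mg.1 j i = 1) ∧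
          (∀ j, 0 ≤ mg.2 j) ∧ ∑ j, mg.2 j = 1},
        ((∑ j, (mg : (Fin J → Fin I → ℝ) × (Fin J → ℝ)).2 j *
            ((∑ i, (mg : (Fin J → Fin I → ℝ) × (Fin J → ℝ)).1 j i * u i j) - v j) : ℝ) : EReal)
          - β (mg : (Fin J → Fin I → ℝ) × (Fin J → ℝ)).1
              (mg : (Fin J → Fin I → ℝ) × (Fin J → ℝ)).2 := by
  let E : (Fin J → Fin I → ℝ) → (Fin I → Fin J → ℝ) → Fin J → ℝ :=
    fun μ w j => ∑ i, μ j i * w i j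
  have hβE : ∀ μ γ, β μ γ = ⨆ w : {w | (0 : Fin J → ℝ) ∈ R w}, ((γ ⬝ᵥ E μ w : ℝ) : EReal) := hβ
  refine EReal.iInf_subtype_coe_eq_iSup _ ?_ ?_
  · rintro ⟨⟨μ, γ⟩, hμ0, hμ1, hγ0, hγ1⟩ α hα
    have hγ : γ ≠ 0 := fun h => by simp [h] at hγ1
    have hd := (hdual u ▸ hα) γ hγ0 hγ μ hμ0 hμ1
    change ((γ ⬝ᵥ (E μ u - v) : ℝ) : EReal) - β μ γ ≤ α
    rwa [dotProduct_sub, EReal.coe_sub_sub_le_iff, ← one_mul α, ← hγ1,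
      ← dotProduct_add_const]
  · intro r hr
    rw [hdual u] at hr
    simp only [Set.mem_ofPred_eq, not_forall, not_le] at hr
    obtain ⟨γ, hγ0, hγ, μ, hμ0, hμ1, hlt⟩ := hr
    have hs : 0 < ∑ j, γ j := Fintype.sum_pos (lt_of_le_of_ne hγ0 (Ne.symm hγ))
    refine ⟨⟨(μ, (∑ j, γ j)⁻¹ • γ), hμ0, hμ1,
      fun j => mul_nonneg (inv_nonneg.mpr hs.le) (hγ0 j), ?_⟩, ?_⟩
    · simp only [Pi.smul_apply, smul_eq_mul, ← Finset.mul_sum, inv_mul_cancel₀ hs.ne']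
    · change (r : EReal) ≤ (((∑ j, γ j)⁻¹ • γ) ⬝ᵥ (E μ u - v) : ℝ) - β μ _
      rw [hβE, ← coe_le_dotProduct_sub_iSup_smul_iff _ _ _ hs, smul_inv_smul₀ hs.ne', ← hβE,
        dotProduct_sub]
      refine (not_le.mp fun h => hlt.not_ge ?_).le
      rwa [EReal.coe_sub_sub_le_iff, ← dotProduct_add_const] at h

/-- Scalarization by a reference variable: for a multivariate convex risk measure with
its dual representation, `inf{α : v + α𝟙 ∈ R(u)}` equals
`sup{γᵀ(E^μ[u] − v) − β(μ,γ) : μ probability vector, γ ≥ 0, γᵀ𝟙 = 1}`. -/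
theorem stmt11 {I J : ℕ}
    (R : (Fin I → Fin J → ℝ) → Set (Fin J → ℝ))
    (hmono : ∀ u v : Fin I → Fin J → ℝ, (∀ i j, u i j ≤ v i j) → R v ⊆ R u)
    (htrans : ∀ (u : Fin I → Fin J → ℝ) (z : Fin J → ℝ),
      R (fun i => u i + z) = (· + z) '' R u)
    (hfin : ∀ u, (R u).Nonempty ∧ R u ≠ Set.univ)
    (hconv : ∀ (u v : Fin I → Fin J → ℝ) (γ : ℝ), γ ∈ Set.Ioo (0:ℝ) 1 →
      ∀ zu ∈ R u, ∀ zv ∈ R v,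
        γ • zu + (1 - γ) • zv ∈ R (fun i => γ • u i + (1 - γ) • v i))
    (β : (Fin J → Fin I → ℝ) → (Fin J → ℝ) → EReal)
    (hβ : ∀ μ γ, β μ γ = ⨆ u : {u : Fin I → Fin J → ℝ | (0 : Fin J → ℝ) ∈ R u},
        ((∑ j, γ j * ∑ i, μ j i * (u : Fin I → Fin J → ℝ) i j : ℝ) : EReal))
    (hdual : ∀ u, R u = {z | ∀ γ : Fin J → ℝ, (∀ j, 0 ≤ γ j) → γ ≠ 0 →
        ∀ μ : Fin J → Fin I → ℝ, (∀ j i, 0 ≤ μ j i) → (∀ j, ∑ i, μ j i = 1) →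
        ((∑ j, γ j * ∑ i, μ j i * u i j : ℝ) : EReal) - β μ γ
          ≤ ((∑ j, γ j * z j : ℝ) : EReal)})
    (u : Fin I → Fin J → ℝ) (v : Fin J → ℝ) :
    (⨅ α : {α : ℝ // (fun j => v j + α) ∈ R u}, ((α : ℝ) : EReal)) =
      ⨆ mg : {mg : (Fin J → Fin I → ℝ) × (Fin J → ℝ) //
          (∀ j i, 0 ≤ mg.1 j i) ∧ (∀ j, ∑ i, mg.1 j i = 1) ∧
          (∀ j, 0 ≤ mg.2 j) ∧ ∑ j, mg.2 j = 1},
        ((∑ j, (mg : (Fin J → Fin I → ℝ) × (Fin J → ℝ)).2 j *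
            ((∑ i, (mg : (Fin J → Fin I → ℝ) × (Fin J → ℝ)).1 j i * u i j) - v j) : ℝ) : EReal)
          - β (mg : (Fin J → Fin I → ℝ) × (Fin J → ℝ)).1
              (mg : (Fin J → Fin I → ℝ) × (Fin J → ℝ)).2 :=
  stmt11_general R β hβ hdual u v
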